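/- For the Cramér model with S_n = Σ_{j=3}^n ξ_j, P{ξ_j=1} = 1/log j, m_n = E[S_n], B_n = Var(S_n): for every b > b' > 1/2, there exists N such that for all n ≥ N, P{|S_n − m_n| ≥ √(2 b B_n log n)} ≤ 2 n^{−b'}. -/

import Mathlib

open MeasureTheory ProbabilityTheory Real Filter

/-!
Centring `ξ j` at `p j = 1 / log j` gives independent variables bounded by `1` whose second
moments sum to `B n`. On `|s| ≤ 1` we have `exp s ≤ 1 + s + s ^ 2 / 2 + |s| ^ 3`, which bounds the
moment generating function of each centred variable by `exp (σ² (t ^ 2 / 2 + |t| ^ 3))`; Chernoff's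
bound at `t = x / B n` then gives the Kolmogorov-type inequality
`P {|S n - m n| ≥ x} ≤ 2 exp (-(x ^ 2 / (2 B n)) (1 - 2 x / B n))` for `0 ≤ x ≤ B n`.
Since `B n ≥ (1 - 1 / log 3) (n - 2) / log n`, `log n = o(B n)`; so at `x = √(2 b B n log n)`
the correction `2 x / B n` tends to `0` and the exponent eventually exceeds `b' log n`.
-/

theorem Real.exp_le_one_add_add_sq_div_two_add_abs_pow_three {x : ℝ} (hx : |x| ≤ 1) :
    exp x ≤ 1 + x + x ^ 2 / 2 + |x| ^ 3 := by
  have h := (abs_sub_le_iff.mp (Real.exp_bound hx (n := 3) (by norm_num))).1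
  norm_num [Finset.sum_range_succ, Nat.factorial] at h
  nlinarith [pow_nonneg (abs_nonneg x) 3]

namespace ProbabilityTheory

variable {Ω : Type*} [MeasurableSpace Ω] {μ : Measure Ω}

theorem mgf_le_exp_of_abs_le_one [IsProbabilityMeasure μ] {X : Ω → ℝ} (hX : Measurable X)
    (hbdd : ∀ᵐ ω ∂μ, |X ω| ≤ 1) (hmean : μ[X] = 0) {t : ℝ} (ht : |t| ≤ 1) :
    mgf X μ t ≤ exp ((∫ ω, X ω ^ 2 ∂μ) * (t ^ 2 / 2 + |t| ^ 3)) := by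
  have hXint : Integrable X μ := .of_bound hX.aestronglyMeasurable 1 (by simpa using hbdd)
  have hX2int : Integrable (fun ω ↦ X ω ^ 2) μ :=
    .of_bound (hX.pow_const 2).aestronglyMeasurable 1 <| by
      filter_upwards [hbdd] with ω hω
      rw [norm_pow, Real.norm_eq_abs]
      exact pow_le_one₀ (abs_nonneg _) hω
  have hpoint : ∀ᵐ ω ∂μ, exp (t * X ω) ≤ 1 + t * X ω + (t ^ 2 / 2 + |t| ^ 3) * X ω ^ 2 := by
    filter_upwards [hbdd] with ω hω
    have htX : |t * X ω| ≤ 1 := by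
      rw [abs_mul]; exact mul_le_one₀ ht (abs_nonneg _) hω
    have hcube : |X ω| ^ 3 ≤ X ω ^ 2 := by
      rw [← sq_abs, pow_succ]
      exact mul_le_of_le_one_right (by positivity) hω
    calc exp (t * X ω) ≤ 1 + t * X ω + (t * X ω) ^ 2 / 2 + |t * X ω| ^ 3 :=
          exp_le_one_add_add_sq_div_two_add_abs_pow_three htX
      _ ≤ 1 + t * X ω + (t ^ 2 / 2 + |t| ^ 3) * X ω ^ 2 := by
          rw [abs_mul, mul_pow]
          nlinarith [mul_le_mul_of_nonneg_left hcube (by positivity : (0 : ℝ) ≤ |t| ^ 3)]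
  calc mgf X μ t ≤ ∫ ω, 1 + t * X ω + (t ^ 2 / 2 + |t| ^ 3) * X ω ^ 2 ∂μ :=
        integral_mono_ae (integrable_exp_mul_of_mem_Icc (a := -1) (b := 1) hX.aemeasurable
            (by filter_upwards [hbdd] with ω hω using abs_le.mp hω))
          (((integrable_const 1).add (hXint.const_mul t)).add (hX2int.const_mul _)) hpoint
    _ = 1 + (∫ ω, X ω ^ 2 ∂μ) * (t ^ 2 / 2 + |t| ^ 3) := by
        rw [integral_add, integral_add, integral_const_mul, integral_const_mul, hmean]
        · simp [mul_comm]
        · exact integrable_const 1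
        · exact hXint.const_mul t
        · exact (integrable_const 1).add (hXint.const_mul t)
        · exact hX2int.const_mul _
    _ ≤ exp ((∫ ω, X ω ^ 2 ∂μ) * (t ^ 2 / 2 + |t| ^ 3)) := by
        linarith [add_one_le_exp ((∫ ω, X ω ^ 2 ∂μ) * (t ^ 2 / 2 + |t| ^ 3))]

theorem iIndepFun.mgf_sum_le_exp_of_abs_le_one [IsProbabilityMeasure μ] {ι : Type*}
    {Y : ι → Ω → ℝ} (hindep : iIndepFun Y μ) (hmeas : ∀ i, Measurable (Y i)) {s : Finset ι}
    (hbdd : ∀ i ∈ s, ∀ᵐ ω ∂μ, |Y i ω| ≤ 1) (hmean : ∀ i ∈ s, μ[Y i] = 0) {t : ℝ} (ht : |t| ≤ 1) :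
    mgf (∑ i ∈ s, Y i) μ t ≤ exp ((∑ i ∈ s, ∫ ω, Y i ω ^ 2 ∂μ) * (t ^ 2 / 2 + |t| ^ 3)) := by
  rw [hindep.mgf_sum hmeas, Finset.sum_mul, exp_sum]
  exact Finset.prod_le_prod (fun _ _ ↦ mgf_nonneg) fun i hi ↦
    mgf_le_exp_of_abs_le_one (hmeas i) (hbdd i hi) (hmean i hi) ht

theorem measureReal_abs_ge_le_of_mgf_le [IsFiniteMeasure μ] {X : Ω → ℝ} {B x : ℝ}
    (hint : ∀ t, Integrable (fun ω ↦ exp (t * X ω)) μ)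
    (hmgf : ∀ t, |t| ≤ 1 → mgf X μ t ≤ exp (B * (t ^ 2 / 2 + |t| ^ 3)))
    (hB : 0 < B) (hx : 0 ≤ x) (hxB : x ≤ B) :
    μ.real {ω | x ≤ |X ω|} ≤ 2 * exp (-(x ^ 2 / (2 * B)) * (1 - 2 * x / B)) := by
  -- `t = x / B` minimises the quadratic part `-t * x + B * t ^ 2 / 2` of the Chernoff exponent.
  set t := x / B
  have ht0 : 0 ≤ t := div_nonneg hx hB.le
  have ht1 : |t| ≤ 1 := by rw [abs_of_nonneg ht0]; exact div_le_one_of_le₀ hxB hB.le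
  have hexponent :
      -t * x + B * (t ^ 2 / 2 + |t| ^ 3) = -(x ^ 2 / (2 * B)) * (1 - 2 * x / B) := by
    rw [abs_of_nonneg ht0]; simp only [t]; field_simp; ring
  have hupper : μ.real {ω | x ≤ X ω} ≤ exp (-(x ^ 2 / (2 * B)) * (1 - 2 * x / B)) :=
    calc μ.real {ω | x ≤ X ω} ≤ exp (-t * x) * mgf X μ t :=
          measure_ge_le_exp_mul_mgf x ht0 (hint t)
      _ ≤ exp (-t * x) * exp (B * (t ^ 2 / 2 + |t| ^ 3)) := by gcongr; exact hmgf t ht1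
      _ = _ := by rw [← exp_add, hexponent]
  have hlower : μ.real {ω | X ω ≤ -x} ≤ exp (-(x ^ 2 / (2 * B)) * (1 - 2 * x / B)) :=
    calc μ.real {ω | X ω ≤ -x} ≤ exp (-(-t) * -x) * mgf X μ (-t) :=
          measure_le_le_exp_mul_mgf (-x) (neg_nonpos.mpr ht0) (hint (-t))
      _ ≤ exp (-(-t) * -x) * exp (B * ((-t) ^ 2 / 2 + |-t| ^ 3)) := by
          gcongr; exact hmgf (-t) (by rwa [abs_neg])
      _ = _ := by rw [← exp_add, abs_neg, neg_sq, ← hexponent]; ring_nf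
  calc μ.real {ω | x ≤ |X ω|} ≤ μ.real ({ω | x ≤ X ω} ∪ {ω | X ω ≤ -x}) :=
        measureReal_mono fun ω (hω : x ≤ |X ω|) ↦
          show x ≤ X ω ∨ X ω ≤ -x from (le_abs'.mp hω).symm
    _ ≤ μ.real {ω | x ≤ X ω} + μ.real {ω | X ω ≤ -x} := measureReal_union_le _ _
    _ ≤ _ := by linarith

theorem iIndepFun.measureReal_abs_sum_ge_le [IsProbabilityMeasure μ] {ι : Type*}
    {Y : ι → Ω → ℝ} (hindep : iIndepFun Y μ) (hmeas : ∀ i, Measurable (Y i)) {s : Finset ι}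
    (hbdd : ∀ i ∈ s, ∀ᵐ ω ∂μ, |Y i ω| ≤ 1) (hmean : ∀ i ∈ s, μ[Y i] = 0) {B x : ℝ}
    (hvar : ∑ i ∈ s, ∫ ω, Y i ω ^ 2 ∂μ = B) (hB : 0 < B) (hx : 0 ≤ x) (hxB : x ≤ B) :
    μ.real {ω | x ≤ |∑ i ∈ s, Y i ω|} ≤ 2 * exp (-(x ^ 2 / (2 * B)) * (1 - 2 * x / B)) := by
  have hint (t : ℝ) : Integrable (fun ω ↦ exp (t * (∑ i ∈ s, Y i) ω)) μ :=
    hindep.integrable_exp_mul_sum hmeas fun i hi ↦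
      integrable_exp_mul_of_mem_Icc (a := -1) (b := 1) (hmeas i).aemeasurable
        (by filter_upwards [hbdd i hi] with ω hω using abs_le.mp hω)
  have h := measureReal_abs_ge_le_of_mgf_le hint
    (fun t ht ↦ hvar ▸ hindep.mgf_sum_le_exp_of_abs_le_one hmeas hbdd hmean ht) hB hx hxB
  simpa only [Finset.sum_apply] using h

section ZeroOne

variable {X : Ω → ℝ}

theorem integral_eq_measureReal_of_eq_zero_or_one (hX : Measurable X)
    (h01 : ∀ ω, X ω = 0 ∨ X ω = 1) : μ[X] = μ.real {ω | X ω = 1} := by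
  calc μ[X] = ∫ ω, {ω | X ω = 1}.indicator (1 : Ω → ℝ) ω ∂μ :=
        integral_congr_ae <| ae_of_all _ fun ω ↦ by rcases h01 ω with h | h <;> simp [h]
    _ = μ.real {ω | X ω = 1} := integral_indicator_one (hX (measurableSet_singleton 1))

theorem integrable_of_eq_zero_or_one [IsFiniteMeasure μ] (hX : Measurable X)
    (h01 : ∀ ω, X ω = 0 ∨ X ω = 1) : Integrable X μ :=
  .of_mem_Icc 0 1 hX.aemeasurable <| ae_of_all _ fun ω ↦ by rcases h01 ω with h | h <;> simp [h]

theorem abs_sub_le_one_of_eq_zero_or_one [IsProbabilityMeasure μ] {p : ℝ}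
    (h01 : ∀ ω, X ω = 0 ∨ X ω = 1) (hp : μ.real {ω | X ω = 1} = p) (ω : Ω) : |X ω - p| ≤ 1 := by
  have := hp ▸ measureReal_le_one (μ := μ) (s := {ω | X ω = 1})
  have := hp ▸ measureReal_nonneg (μ := μ) (s := {ω | X ω = 1})
  rw [abs_le]; rcases h01 ω with h | h <;> constructor <;> linarith

theorem integral_sub_eq_zero_of_eq_zero_or_one [IsProbabilityMeasure μ] {p : ℝ}
    (hX : Measurable X) (h01 : ∀ ω, X ω = 0 ∨ X ω = 1) (hp : μ.real {ω | X ω = 1} = p) :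
    ∫ ω, X ω - p ∂μ = 0 := by
  rw [integral_sub (integrable_of_eq_zero_or_one hX h01) (integrable_const _),
    integral_eq_measureReal_of_eq_zero_or_one hX h01, hp]
  simp

theorem integral_sub_sq_of_eq_zero_or_one [IsProbabilityMeasure μ] {p : ℝ}
    (hX : Measurable X) (h01 : ∀ ω, X ω = 0 ∨ X ω = 1) (hp : μ.real {ω | X ω = 1} = p) :
    ∫ ω, (X ω - p) ^ 2 ∂μ = p * (1 - p) := by
  have hsq (ω : Ω) : (X ω - p) ^ 2 = (1 - 2 * p) * X ω + p ^ 2 := by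
    rcases h01 ω with h | h <;> rw [h] <;> ring
  simp_rw [hsq]
  rw [integral_add ((integrable_of_eq_zero_or_one hX h01).const_mul _) (integrable_const _),
    integral_const_mul, integral_eq_measureReal_of_eq_zero_or_one hX h01, hp]
  simp only [integral_const, probReal_univ, smul_eq_mul, one_mul]
  ring

end ZeroOne

end ProbabilityTheory

noncomputable def cramerVariance (n : ℕ) : ℝ :=
  ∑ j ∈ Finset.Icc 3 n, 1 / log j * (1 - 1 / log j)

theorem Real.one_lt_log_three : 1 < log 3 :=
  (lt_log_iff_exp_lt (by norm_num)).mpr exp_one_lt_three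

theorem Real.one_div_log_three_lt_one : 1 / log 3 < 1 :=
  (div_lt_one (one_pos.trans one_lt_log_three)).mpr one_lt_log_three

theorem le_cramerVariance {n : ℕ} (hn : 3 ≤ n) :
    (1 - 1 / log 3) * (((n : ℝ) - 2) / log n) ≤ cramerVariance n := by
  have hterm : ∀ j ∈ Finset.Icc 3 n,
      1 / log n * (1 - 1 / log 3) ≤ 1 / log j * (1 - 1 / log j) := by
    intro j hj
    obtain ⟨h3j, hjn⟩ := Finset.mem_Icc.mp hj
    have h3j' : (3 : ℝ) ≤ j := by exact_mod_cast h3j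
    have hlogj : 0 < log j := log_pos (by linarith)
    gcongr
    exact sub_nonneg.mpr one_div_log_three_lt_one.le
  calc (1 - 1 / log 3) * (((n : ℝ) - 2) / log n)
      = (Finset.Icc 3 n).card * (1 / log n * (1 - 1 / log 3)) := by
        rw [Nat.card_Icc, Nat.cast_sub (by omega)]; push_cast; ring
    _ ≤ cramerVariance n := by
        rw [← nsmul_eq_mul, ← Finset.sum_const]; exact Finset.sum_le_sum hterm

theorem cramerVariance_pos {n : ℕ} (hn : 3 ≤ n) : 0 < cramerVariance n := by
  refine lt_of_lt_of_le ?_ (le_cramerVariance hn)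
  have hn' : (3 : ℝ) ≤ n := by exact_mod_cast hn
  have : 0 < log n := log_pos (by linarith)
  have : 0 < 1 - 1 / log 3 := sub_pos.mpr one_div_log_three_lt_one
  have : (0 : ℝ) < n - 2 := by linarith
  positivity

theorem tendsto_log_div_cramerVariance :
    Tendsto (fun n : ℕ ↦ log n / cramerVariance n) atTop (nhds 0) := by
  set c := 1 - 1 / log 3
  have hc : 0 < c := sub_pos.mpr one_div_log_three_lt_one
  have hlim : Tendsto (fun n : ℕ ↦ c⁻¹ * (log n ^ 2 / (1 * n + -2))) atTop (nhds 0) := by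
    simpa using ((tendsto_pow_log_div_mul_add_atTop 1 (-2) 2 one_ne_zero).comp
      tendsto_natCast_atTop_atTop).const_mul c⁻¹
  refine squeeze_zero' ?_ ?_ hlim
  · filter_upwards [eventually_ge_atTop 3] with n hn
    exact div_nonneg (log_natCast_nonneg n) (cramerVariance_pos hn).le
  · filter_upwards [eventually_ge_atTop 3] with n hn
    have hn' : (3 : ℝ) ≤ n := by exact_mod_cast hn
    have hlogn : 0 < log n := log_pos (by linarith)
    calc log n / cramerVariance n ≤ log n / (c * ((n - 2) / log n)) := by
          gcongr
          · exact mul_pos hc (div_pos (by linarith) hlogn)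
          · exact le_cramerVariance hn
      _ = c⁻¹ * (log n ^ 2 / (1 * n + -2)) := by field_simp; ring

theorem sqrt_two_mul_le_and_le_exponent {b b' B L : ℝ} (hb' : 0 < b') (hbb : b' < b)
    (hB : 0 < B) (hL : 0 ≤ L) (hLB : L / B ≤ (b - b') ^ 2 / (8 * b ^ 3)) :
    √(2 * b * B * L) ≤ B ∧
      -(√(2 * b * B * L) ^ 2 / (2 * B)) * (1 - 2 * √(2 * b * B * L) / B) ≤ -b' * L := by
  have hb : 0 < b := hb'.trans hbb
  set x := √(2 * b * B * L)
  have hx2 : x ^ 2 = 2 * b * B * L := sq_sqrt (by positivity)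
  -- The constant in `hLB` is what makes `2 * x / B ≤ 1 - b' / b`.
  have hxB : x ≤ (b - b') / (2 * b) * B := by
    refine (sqrt_le_left (by have := sub_pos.mpr hbb; positivity)).mpr ?_
    rw [div_le_div_iff₀ hB (by positivity)] at hLB
    field_simp
    nlinarith
  have hfrac : (b - b') / (2 * b) * B ≤ B / 2 := by
    rw [div_mul_eq_mul_div, div_le_div_iff₀ (by positivity) two_pos]
    nlinarith
  refine ⟨by linarith, ?_⟩
  rw [hx2]
  have : 2 * x / B ≤ (b - b') / b := by
    rw [div_le_iff₀ hB]
    calc 2 * x ≤ 2 * ((b - b') / (2 * b) * B) := by linarith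
      _ = (b - b') / b * B := by field_simp
  have h := mul_le_mul_of_nonneg_left this (by positivity : 0 ≤ b * L)
  have hbL : b * L * ((b - b') / b) = b * L - b' * L := by field_simp
  have hlhs :
      -(2 * b * B * L / (2 * B)) * (1 - 2 * x / B) = -(b * L) + b * L * (2 * x / B) := by
    field_simp; ring
  linarith

theorem cramer_measureReal_abs_sub_ge_le {Ω : Type*} [MeasurableSpace Ω] {μ : Measure Ω}
    [IsProbabilityMeasure μ] {ξ : ℕ → Ω → ℝ} (hmeas : ∀ j, Measurable (ξ j))
    (hindep : iIndepFun ξ μ) (hval : ∀ j, 3 ≤ j → ∀ ω, ξ j ω = 0 ∨ ξ j ω = 1)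
    (hdist : ∀ j, 3 ≤ j → μ {ω | ξ j ω = 1} = ENNReal.ofReal (1 / log j))
    {n : ℕ} (hn : 3 ≤ n) {x : ℝ} (hx : 0 ≤ x) (hxB : x ≤ cramerVariance n) :
    μ.real {ω | x ≤ |∑ j ∈ Finset.Icc 3 n, ξ j ω - ∑ j ∈ Finset.Icc 3 n, 1 / log j|} ≤
      2 * exp (-(x ^ 2 / (2 * cramerVariance n)) * (1 - 2 * x / cramerVariance n)) := by
  have hp (j : ℕ) (hj : 3 ≤ j) : μ.real {ω | ξ j ω = 1} = 1 / log j := by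
    rw [measureReal_def, hdist j hj,
      ENNReal.toReal_ofReal (div_nonneg zero_le_one (log_natCast_nonneg j))]
  have h3 {j : ℕ} (hj : j ∈ Finset.Icc 3 n) : 3 ≤ j := (Finset.mem_Icc.mp hj).1
  have hY := iIndepFun.measureReal_abs_sum_ge_le (Y := fun j ω ↦ ξ j ω - 1 / log j)
    (s := Finset.Icc 3 n) (B := cramerVariance n)
    (hindep.comp _ fun j ↦ measurable_id.sub_const (1 / log j)) (fun j ↦ (hmeas j).sub_const _)
    (fun j hj ↦ ae_of_all _ <| abs_sub_le_one_of_eq_zero_or_one (hval j (h3 hj)) (hp j (h3 hj)))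
    (fun j hj ↦ integral_sub_eq_zero_of_eq_zero_or_one (hmeas j) (hval j (h3 hj)) (hp j (h3 hj)))
    (Finset.sum_congr rfl fun j hj ↦
      integral_sub_sq_of_eq_zero_or_one (hmeas j) (hval j (h3 hj)) (hp j (h3 hj)))
    (cramerVariance_pos hn) hx hxB
  simpa only [Finset.sum_sub_distrib] using hY

/-- Cramér model deviation bound: for every `b > b' > 1/2` there is `N` such that for all
`n ≥ N`, `P{|S_n − m_n| ≥ √(2 b B_n log n)} ≤ 2 n^{−b'}`. -/
theorem stmt_8 {Ω : Type*} [MeasurableSpace Ω] (μ : Measure Ω) [IsProbabilityMeasure μ]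
    (ξ : ℕ → Ω → ℝ) (hmeas : ∀ j, Measurable (ξ j))
    (hindep : iIndepFun ξ μ)
    (hval : ∀ j, 3 ≤ j → ∀ ω, ξ j ω = 0 ∨ ξ j ω = 1)
    (hdist : ∀ j, 3 ≤ j → μ {ω | ξ j ω = 1} = ENNReal.ofReal (1 / Real.log j)) :
    ∀ b b' : ℝ, 1 / 2 < b' → b' < b →
      ∃ N : ℕ, ∀ n : ℕ, N ≤ n →
        μ {ω | Real.sqrt (2 * b * (∑ j ∈ Finset.Icc 3 n, (1 / Real.log j) * (1 - 1 / Real.log j))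
              * Real.log n)
            ≤ |(∑ j ∈ Finset.Icc 3 n, ξ j ω) - ∑ j ∈ Finset.Icc 3 n, 1 / Real.log j|}
          ≤ ENNReal.ofReal (2 * (n : ℝ) ^ (-b')) := by
  intro b b' hb' hbb
  have hb : 0 < b := by linarith
  obtain ⟨N, hN⟩ := eventually_atTop.mp <| (eventually_ge_atTop 3).and <|
    tendsto_log_div_cramerVariance.eventually_le_const
      (by have := sub_pos.mpr hbb; positivity : (0 : ℝ) < (b - b') ^ 2 / (8 * b ^ 3))
  refine ⟨N, fun n hn ↦ ?_⟩
  obtain ⟨hn3, hsmall⟩ := hN n hn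
  obtain ⟨hxB, hexponent⟩ := sqrt_two_mul_le_and_le_exponent (by linarith) hbb
    (cramerVariance_pos hn3) (log_natCast_nonneg n) hsmall
  rw [ENNReal.le_ofReal_iff_toReal_le (measure_ne_top _ _) (by positivity), ← measureReal_def]
  calc _ ≤ _ := cramer_measureReal_abs_sub_ge_le hmeas hindep hval hdist hn3 (sqrt_nonneg _) hxB
    _ ≤ 2 * exp (-b' * log n) := by gcongr
    _ = 2 * (n : ℝ) ^ (-b') := by
        rw [rpow_def_of_pos (by positivity), mul_comm (log n)]
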